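/- arXiv:1901.08866 — 2 statements merged into one kernel-verified Lean document; each statement's English description precedes it below -/
import Mathlib

section
/- Let 1 < p < ∞. Then for every f ∈ C_c^∞(ℝ^N) one has ∫_{ℝ^N} |⟨x, ∇f(x)⟩|^p dμ_k ≥ ((N+2γ)/p)^p ∫_{ℝ^N} |f|^p dμ_k, where ∇ is the usual gradient. -/
open MeasureTheory Finset

noncomputable section

abbrev Euc (N : ℕ) := EuclideanSpace ℝ (Fin N)

/-- Reflection in the hyperplane orthogonal to `α`. -/
def reflect {N : ℕ} (α x : Euc N) : Euc N :=
  x - (2 * (inner ℝ α x : ℝ) / (inner ℝ α α : ℝ)) • α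

/-- A root system in `ℝ^N` with all roots of squared length `2`, together with a
choice of positive subsystem `Rp` and a nonnegative multiplicity function `k`
invariant under the reflections in the roots. -/
structure DunklSystem (N : ℕ) where
  R : Finset (Euc N)
  Rp : Finset (Euc N)
  k : Euc N → ℝ
  zero_not_mem : (0 : Euc N) ∉ R
  normSq : ∀ α ∈ R, (inner ℝ α α : ℝ) = 2
  lineInter : ∀ α ∈ R, ∀ c : ℝ, c • α ∈ R → c = 1 ∨ c = -1
  reflect_mem : ∀ α ∈ R, ∀ β ∈ R, reflect α β ∈ R
  pos_union : (R : Set (Euc N)) = (Rp : Set (Euc N)) ∪ (-(Rp : Set (Euc N)))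
  pos_disj : Disjoint (Rp : Set (Euc N)) (-(Rp : Set (Euc N)))
  k_nonneg : ∀ α ∈ R, 0 ≤ k α
  k_inv : ∀ α ∈ R, ∀ β ∈ R, k (reflect α β) = k β

namespace DunklSystem

variable {N : ℕ} (S : DunklSystem N)

/-- `γ = Σ_{α ∈ R₊} k_α`. -/
def γconst : ℝ := ∑ α ∈ S.Rp, S.k α

/-- The weight function `w_k(x) = Π_{α ∈ R₊} |⟨α,x⟩|^{2 k_α}`. -/
def w (x : Euc N) : ℝ := ∏ α ∈ S.Rp, |(inner ℝ α x : ℝ)| ^ (2 * S.k α)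

/-- The weighted measure `dμ_k = w_k(x) dx`. -/
def μ : Measure (Euc N) := volume.withDensity fun x => ENNReal.ofReal (S.w x)

/-- The Dunkl operator `T_i` acting on real-valued functions. -/
def T (i : Fin N) (f : Euc N → ℝ) (x : Euc N) : ℝ :=
  fderiv ℝ f x (EuclideanSpace.single i 1) +
    ∑ α ∈ S.Rp, S.k α * α i * ((f x - f (reflect α x)) / (inner ℝ α x : ℝ))

/-- The squared euclidean norm `|∇_k f|²` of the Dunkl gradient of a real-valued `f`. -/
def gradKSq (f : Euc N → ℝ) (x : Euc N) : ℝ := ∑ i, (S.T i f x) ^ 2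

/-- The Dunkl Laplacian `Δ_k = Σ_i T_i²`. -/
def lap (f : Euc N → ℝ) (x : Euc N) : ℝ := ∑ i, S.T i (S.T i f) x

/-- The Dunkl operator `T_i` acting on complex-valued functions (componentwise). -/
def Tc (i : Fin N) (f : Euc N → ℂ) (x : Euc N) : ℂ :=
  fderiv ℝ f x (EuclideanSpace.single i 1) +
    ∑ α ∈ S.Rp, (↑(S.k α * α i) : ℂ) * ((f x - f (reflect α x)) / ((inner ℝ α x : ℝ) : ℂ))

/-- The squared norm `|∇_k f|²` of the Dunkl gradient of a complex-valued `f`. -/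
def gradKSqC (f : Euc N → ℂ) (x : Euc N) : ℝ := ∑ i, ‖S.Tc i f x‖ ^ 2

end DunklSystem

/-- `|∇f|²` for a real-valued function, with `∇` the usual gradient. -/
def gradSq {N : ℕ} (f : Euc N → ℝ) (x : Euc N) : ℝ :=
  ∑ i, (fderiv ℝ f x (EuclideanSpace.single i 1)) ^ 2

/-- `|∇f|²` for a complex-valued function, with `∇` the usual gradient. -/
def gradSqC {N : ℕ} (f : Euc N → ℂ) (x : Euc N) : ℝ :=
  ∑ i, ‖fderiv ℝ f x (EuclideanSpace.single i 1)‖ ^ 2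

section Aux

open Real Metric Set Filter

namespace DunklSystem

variable {N : ℕ} (S : DunklSystem N)

lemma Rp_subset_R {α : Euc N} (h : α ∈ S.Rp) : α ∈ S.R := by
  have hh : (α : Euc N) ∈ (S.R : Set (Euc N)) := by
    rw [S.pos_union]; exact Or.inl h
  exact_mod_cast hh

lemma k_nonneg' {α : Euc N} (h : α ∈ S.Rp) : 0 ≤ S.k α :=
  S.k_nonneg α (S.Rp_subset_R h)

lemma γconst_nonneg : 0 ≤ S.γconst :=
  Finset.sum_nonneg fun _ h => S.k_nonneg' h

lemma w_nonneg (x : Euc N) : 0 ≤ S.w x :=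
  Finset.prod_nonneg fun _ _ => Real.rpow_nonneg (abs_nonneg _) _

lemma w_continuous : Continuous S.w := by
  apply continuous_finset_prod
  intro α hα
  exact ((innerSL ℝ α).continuous.abs).rpow_const fun x =>
    Or.inr (by have := S.k_nonneg' hα; linarith)

lemma w_smul {t : ℝ} (ht : 0 ≤ t) (x : Euc N) :
    S.w (t • x) = t ^ (2 * S.γconst) * S.w x := by
  unfold w
  have h1 : ∀ α ∈ S.Rp, |(inner ℝ α (t • x) : ℝ)| ^ (2 * S.k α)
      = t ^ (2 * S.k α) * |(inner ℝ α x : ℝ)| ^ (2 * S.k α) := by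
    intro α hα
    rw [real_inner_smul_right, abs_mul, abs_of_nonneg ht,
      Real.mul_rpow ht (abs_nonneg _)]
  rw [Finset.prod_congr rfl h1, Finset.prod_mul_distrib,
    ← Real.rpow_sum_of_nonneg ht (fun α hα => by have := S.k_nonneg' hα; linarith),
    ← Finset.mul_sum]
  rfl

instance instFinOnCompacts : IsFiniteMeasureOnCompacts S.μ := by
  constructor
  intro K hK
  rw [DunklSystem.μ, withDensity_apply _ hK.measurableSet]
  obtain ⟨C, hC⟩ := hK.exists_bound_of_continuousOn S.w_continuous.continuousOn
  calc ∫⁻ x in K, ENNReal.ofReal (S.w x) ∂volume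
      ≤ ∫⁻ x in K, ENNReal.ofReal C ∂volume := by
        apply setLIntegral_mono' hK.measurableSet
        intro x hx
        exact ENNReal.ofReal_le_ofReal ((le_abs_self _).trans (hC x hx))
    _ = ENNReal.ofReal C * volume K := by rw [setLIntegral_const]
    _ < ⊤ := ENNReal.mul_lt_top ENNReal.ofReal_lt_top hK.measure_lt_top

lemma integral_mu (g : Euc N → ℝ) :
    ∫ x, g x ∂S.μ = ∫ x, S.w x * g x := by
  have hmeas : Measurable fun x => (S.w x).toNNReal :=
    S.w_continuous.measurable.real_toNNReal
  rw [DunklSystem.μ,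
    show (fun x => ENNReal.ofReal (S.w x))
      = (fun x => (((S.w x).toNNReal : NNReal) : ENNReal)) from rfl,
    integral_withDensity_eq_integral_smul hmeas]
  congr 1
  funext x
  rw [NNReal.smul_def, Real.coe_toNNReal _ (S.w_nonneg x), smul_eq_mul]

lemma integral_comp_smul_mu (g : Euc N → ℝ) {t : ℝ} (ht : 0 < t) :
    ∫ x, g (t • x) ∂S.μ = (t ^ ((N : ℝ) + 2 * S.γconst))⁻¹ * ∫ x, g x ∂S.μ := by
  have h2γ : (0:ℝ) < t ^ (2 * S.γconst) := Real.rpow_pos_of_pos ht _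
  rw [S.integral_mu fun x => g (t • x), S.integral_mu g]
  have h1 : ∀ x : Euc N, S.w x * g (t • x)
      = (t ^ (2 * S.γconst))⁻¹ * ((fun y => S.w y * g y) (t • x)) := by
    intro x
    simp only
    rw [S.w_smul ht.le]
    field_simp
  simp_rw [h1]
  rw [integral_const_mul,
    MeasureTheory.Measure.integral_comp_smul volume (fun y => S.w y * g y) t]
  have hfr : (Module.finrank ℝ (Euc N)) = N := finrank_euclideanSpace_fin
  rw [hfr, smul_eq_mul, abs_of_nonneg (inv_nonneg.2 (pow_nonneg ht.le _))]
  rw [show (t : ℝ) ^ N = t ^ ((N : ℝ)) from (Real.rpow_natCast t N).symm]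
  rw [← mul_assoc, ← mul_inv, ← Real.rpow_add ht]
  ring_nf

end DunklSystem

end Aux

/-- Hardy-type inequality for the usual gradient in the weighted space `L^p(μ_k)`:
`∫ |⟨x, ∇f⟩|^p dμ_k ≥ ((N+2γ)/p)^p ∫ |f|^p dμ_k` for all `f ∈ C_c^∞(ℝ^N)`. -/
theorem hardy_type_usual_gradient {N : ℕ} (hN : 1 ≤ N) (S : DunklSystem N)
    (p : ℝ) (hp : 1 < p) (f : Euc N → ℝ)
    (hf : ContDiff ℝ (⊤ : ℕ∞) f) (hsupp : HasCompactSupport f) :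
    ∫ x, |fderiv ℝ f x x| ^ p ∂S.μ ≥
      (((N : ℝ) + 2 * S.γconst) / p) ^ p * ∫ x, |f x| ^ p ∂S.μ := by
  classical
  have hp0 : (0:ℝ) < p := lt_trans one_pos hp
  have hγ := S.γconst_nonneg
  set d : ℝ := (N : ℝ) + 2 * S.γconst with hd
  have hd0 : 0 < d := by
    rw [hd]
    have h1 : (1:ℝ) ≤ (N:ℝ) := by exact_mod_cast hN
    linarith
  set B : ℝ := ∫ x, |f x| ^ p ∂S.μ with hBdef
  set A : ℝ := ∫ x, |fderiv ℝ f x x| ^ p ∂S.μ with hAdef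
  -- basic regularity
  have hfc : Continuous f := hf.continuous
  have hdf : Differentiable ℝ f := hf.differentiable (by simp)
  have hfd_cont : Continuous (fderiv ℝ f) := hf.continuous_fderiv (by simp)
  have hDcont : Continuous fun x : Euc N => fderiv ℝ f x x :=
    hfd_cont.clm_apply continuous_id
  -- support radius
  obtain ⟨R₀, hR₀⟩ := hsupp.isBounded.subset_closedBall 0
  set R : ℝ := max R₀ 1 with hRdef
  have hR1 : (1:ℝ) ≤ R := le_max_right _ _
  have hRsupp : tsupport f ⊆ Metric.closedBall 0 R :=
    hR₀.trans (Metric.closedBall_subset_closedBall (le_max_left _ _))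
  have hfd0 : ∀ y : Euc N, y ∉ tsupport f → fderiv ℝ f y = 0 := by
    intro y hy
    have hev : f =ᶠ[nhds y] (fun _ => (0:ℝ)) := by
      filter_upwards [(isClosed_tsupport f).isOpen_compl.mem_nhds hy] with z hz
      exact image_eq_zero_of_notMem_tsupport hz
    rw [hev.fderiv_eq]
    exact fderiv_const_apply 0
  have hfz : ∀ y : Euc N, R < ‖y‖ → f y = 0 := by
    intro y hy
    apply image_eq_zero_of_notMem_tsupport
    intro hmem
    have h := hRsupp hmem
    rw [Metric.mem_closedBall, dist_zero_right] at h
    linarith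
  have hfdz : ∀ y : Euc N, R < ‖y‖ → fderiv ℝ f y = 0 := by
    intro y hy
    apply hfd0
    intro hmem
    have h := hRsupp hmem
    rw [Metric.mem_closedBall, dist_zero_right] at h
    linarith
  -- bounds
  obtain ⟨M₀, hM₀⟩ := hsupp.exists_bound_of_continuous hfc
  set M : ℝ := max M₀ 0 with hMdef
  have hM : ∀ y, |f y| ≤ M := fun y =>
    le_trans (by rw [← Real.norm_eq_abs]; exact hM₀ y) (le_max_left _ _)
  have hM0 : (0:ℝ) ≤ M := le_max_right _ _
  obtain ⟨L₀, hL₀⟩ := (hsupp.fderiv ℝ).exists_bound_of_continuous hfd_cont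
  set L : ℝ := max L₀ 0 with hLdef
  have hL : ∀ y, ‖fderiv ℝ f y‖ ≤ L := fun y => le_trans (hL₀ y) (le_max_left _ _)
  have hL0 : (0:ℝ) ≤ L := le_max_right _ _
  -- the derivative of u ↦ |u|^p
  set φ' : ℝ → ℝ := fun u => p * |u| ^ (p - 2) * u with hφ'def
  have habs : ∀ u : ℝ, |φ' u| = p * |u| ^ (p - 1) := by
    intro u
    rcases eq_or_ne u 0 with rfl | hu
    · simp [hφ'def, Real.zero_rpow (show p - 1 ≠ 0 from (sub_pos.2 hp).ne')]
    · rw [hφ'def]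
      simp only
      rw [abs_mul, abs_mul, abs_of_nonneg hp0.le,
        abs_of_nonneg (Real.rpow_nonneg (abs_nonneg u) _), mul_assoc,
        ← Real.rpow_add_one (abs_ne_zero.mpr hu) (p - 2),
        show p - 2 + 1 = p - 1 by ring]
  have hφ'c : Continuous φ' := by
    rw [continuous_iff_continuousAt]
    intro u
    rcases eq_or_ne u 0 with rfl | hu
    · have h0 : φ' 0 = 0 := by simp [hφ'def]
      rw [ContinuousAt, h0]
      have hmaj : Filter.Tendsto (fun v : ℝ => p * |v| ^ (p-1)) (nhds 0) (nhds 0) := by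
        have hc : ContinuousAt (fun v : ℝ => p * |v| ^ (p-1)) 0 :=
          continuousAt_const.mul
            ((Real.continuousAt_rpow_const _ _ (Or.inr (by linarith))).comp
              continuous_abs.continuousAt)
        have h00 : p * |(0:ℝ)| ^ (p-1) = 0 := by
          simp [Real.zero_rpow (show p - 1 ≠ 0 from (sub_pos.2 hp).ne')]
        rw [ContinuousAt, h00] at hc
        exact hc
      exact squeeze_zero_norm (fun v => le_of_eq (by rw [Real.norm_eq_abs, habs v])) hmaj
    · exact (continuousAt_const.mul
        ((Real.continuousAt_rpow_const _ _ (Or.inl (abs_ne_zero.2 hu))).comp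
          continuous_abs.continuousAt)).mul continuousAt_id
  -- differentiability in the dilation parameter
  have h_diff : ∀ (x : Euc N) (t : ℝ),
      HasDerivAt (fun s => |f (s • x)| ^ p) (φ' (f (t • x)) * (fderiv ℝ f (t • x) x)) t := by
    intro x t
    have h1 : HasDerivAt (fun s : ℝ => s • x) x t := by
      simpa using (hasDerivAt_id t).smul_const x
    have h2 : HasDerivAt (fun s : ℝ => f (s • x)) (fderiv ℝ f (t • x) x) t :=
      (hdf (t • x)).hasFDerivAt.comp_hasDerivAt t h1
    have h3 := (hasDerivAt_abs_rpow (f (t • x)) hp).comp t h2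
    simpa [hφ'def, Function.comp_def] using h3
  -- uniform bound
  set bound : Euc N → ℝ :=
    (Metric.closedBall (0 : Euc N) (2*R)).indicator
      (fun _ => p * M ^ (p-1) * (L * (2*R))) with hbdef
  have h_bound : ∀ (x : Euc N), ∀ t ∈ Metric.ball (1:ℝ) (1/2),
      ‖φ' (f (t • x)) * (fderiv ℝ f (t • x) x)‖ ≤ bound x := by
    intro x t ht
    rw [Metric.mem_ball, Real.dist_eq] at ht
    have ht2 : 1/2 < t := by
      rcases abs_lt.1 ht with ⟨h1, h2⟩; linarith
    by_cases hx : ‖x‖ ≤ 2*R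
    · rw [hbdef, Set.indicator_of_mem (mem_closedBall_zero_iff.2 hx)]
      rw [Real.norm_eq_abs, abs_mul, habs]
      have e1 : p * |f (t • x)| ^ (p-1) ≤ p * M ^ (p-1) :=
        mul_le_mul_of_nonneg_left
          (Real.rpow_le_rpow (abs_nonneg _) (hM _) (by linarith)) hp0.le
      have e2 : |(fderiv ℝ f (t • x)) x| ≤ L * (2*R) := by
        calc |(fderiv ℝ f (t • x)) x| ≤ ‖fderiv ℝ f (t • x)‖ * ‖x‖ :=
              (fderiv ℝ f (t • x)).le_opNorm x
          _ ≤ L * (2*R) := mul_le_mul (hL _) hx (norm_nonneg _) hL0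
      exact mul_le_mul e1 e2 (abs_nonneg _) (by positivity)
    · push_neg at hx
      have hnorm : R < ‖t • x‖ := by
        rw [norm_smul, Real.norm_eq_abs, abs_of_pos (by linarith : (0:ℝ) < t)]
        nlinarith
      rw [hbdef, Set.indicator_of_notMem
        (fun hmem => absurd (mem_closedBall_zero_iff.1 hmem) (not_le.2 hx))]
      rw [hfz _ hnorm, hfdz _ hnorm]
      simp [hφ'def]
  have hbound_int : Integrable bound S.μ := by
    rw [hbdef, integrable_indicator_iff measurableSet_closedBall]
    refine integrableOn_const ?_
    exact (isCompact_closedBall _ _).measure_lt_top.ne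
  have hcont_t : ∀ t : ℝ, Continuous fun x : Euc N => |f (t • x)| ^ p := by
    intro t
    exact ((hfc.comp (continuous_const_smul t)).abs).rpow_const fun x => Or.inr hp0.le
  have hF_int : Integrable (fun x => |f ((1:ℝ) • x)| ^ p) S.μ := by
    apply (hcont_t 1).integrable_of_hasCompactSupport
    have heq : (fun x : Euc N => |f ((1:ℝ) • x)| ^ p) = fun x => |f x| ^ p := by
      funext x; rw [one_smul]
    rw [heq]
    exact hsupp.comp_left (g := fun u : ℝ => |u| ^ p)
      (by simp [Real.zero_rpow hp0.ne'])
  have hF'cont : Continuous fun x : Euc N =>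
      φ' (f ((1:ℝ) • x)) * (fderiv ℝ f ((1:ℝ) • x) x) :=
    (hφ'c.comp (hfc.comp (continuous_const_smul (1:ℝ)))).mul
      ((hfd_cont.comp (continuous_const_smul (1:ℝ))).clm_apply continuous_id)
  obtain ⟨hF'_int, hderiv⟩ :=
    hasDerivAt_integral_of_dominated_loc_of_deriv_le
      (F := fun (t : ℝ) (x : Euc N) => |f (t • x)| ^ p)
      (F' := fun (t : ℝ) (x : Euc N) => φ' (f (t • x)) * (fderiv ℝ f (t • x) x))
      (x₀ := (1:ℝ)) (s := Metric.ball (1:ℝ) (1/2)) (bound := bound) (μ := S.μ)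
      (Metric.ball_mem_nhds _ (by norm_num))
      (Filter.Eventually.of_forall fun t => (hcont_t t).aestronglyMeasurable)
      hF_int
      hF'cont.aestronglyMeasurable
      (Filter.Eventually.of_forall fun x t ht => h_bound x t ht)
      hbound_int
      (Filter.Eventually.of_forall fun x t _ => h_diff x t)
  -- scaling identity
  have hscale : ∀ t : ℝ, 0 < t → (∫ x, |f (t • x)| ^ p ∂S.μ) = (t ^ d)⁻¹ * B := by
    intro t ht
    have h := S.integral_comp_smul_mu (fun y => |f y| ^ p) ht
    rw [h, ← hd, ← hBdef]
  have hG : HasDerivAt (fun t : ℝ => t ^ (-d) * B) (-d * B) 1 := by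
    have h := (Real.hasDerivAt_rpow_const (x := (1:ℝ)) (p := -d)
      (Or.inl one_ne_zero)).mul_const B
    simpa using h
  have hev : (fun t : ℝ => ∫ x, |f (t • x)| ^ p ∂S.μ)
      =ᶠ[nhds (1:ℝ)] fun t => t ^ (-d) * B := by
    filter_upwards [Ioi_mem_nhds (zero_lt_one)] with t ht
    rw [hscale t ht, Real.rpow_neg (le_of_lt ht)]
  have hkey : (∫ x, φ' (f ((1:ℝ) • x)) * (fderiv ℝ f ((1:ℝ) • x) x) ∂S.μ) = -d * B := by
    have hderiv' : HasDerivAt (fun t : ℝ => t ^ (-d) * B)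
        (∫ x, φ' (f ((1:ℝ) • x)) * (fderiv ℝ f ((1:ℝ) • x) x) ∂S.μ) 1 :=
      hderiv.congr_of_eventuallyEq hev.symm
    exact hderiv'.unique hG
  simp only [one_smul] at hkey hF'_int
  -- from the identity to the inequality
  have hdB : d * B = ∫ x, -(φ' (f x) * (fderiv ℝ f x x)) ∂S.μ := by
    rw [integral_neg, hkey]; ring
  have hmaj_int : Integrable (fun x => p * |f x| ^ (p-1) * |fderiv ℝ f x x|) S.μ := by
    apply Continuous.integrable_of_hasCompactSupport
    · exact (continuous_const.mul
        ((hfc.abs).rpow_const fun x => Or.inr (by linarith))).mul hDcont.abs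
    · apply HasCompactSupport.intro hsupp
      intro x hx
      simp [hfd0 x hx]
  have hstep1 : d * B ≤ ∫ x, p * |f x| ^ (p-1) * |fderiv ℝ f x x| ∂S.μ := by
    rw [hdB]
    apply integral_mono hF'_int.neg hmaj_int
    intro x
    calc -(φ' (f x) * fderiv ℝ f x x) ≤ |φ' (f x) * fderiv ℝ f x x| := neg_le_abs _
      _ = p * |f x| ^ (p-1) * |fderiv ℝ f x x| := by rw [abs_mul, habs]
  -- Hölder
  set q : ℝ := Real.conjExponent p with hqdef
  have hpq : p.HolderConjugate q := Real.HolderConjugate.conjExponent hp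
  have hDmem : MemLp (fun x => |fderiv ℝ f x x|) (ENNReal.ofReal p) S.μ := by
    apply Continuous.memLp_of_hasCompactSupport hDcont.abs
    apply HasCompactSupport.intro hsupp
    intro x hx
    simp [hfd0 x hx]
  have hfmem : MemLp (fun x => |f x| ^ (p-1)) (ENNReal.ofReal q) S.μ := by
    apply Continuous.memLp_of_hasCompactSupport
      ((hfc.abs).rpow_const fun x => Or.inr (by linarith))
    apply HasCompactSupport.intro hsupp
    intro x hx
    simp [image_eq_zero_of_notMem_tsupport hx,
      Real.zero_rpow (show p - 1 ≠ 0 from (sub_pos.2 hp).ne')]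
  have hH := integral_mul_le_Lp_mul_Lq_of_nonneg (μ := S.μ) hpq
    (Filter.Eventually.of_forall fun x => abs_nonneg _)
    (Filter.Eventually.of_forall fun x => Real.rpow_nonneg (abs_nonneg _) _)
    hDmem hfmem
  have hcollapse : (∫ x, (|f x| ^ (p-1)) ^ q ∂S.μ) = B := by
    rw [hBdef]
    congr 1
    funext x
    rw [← Real.rpow_mul (abs_nonneg _), hpq.sub_one_mul_conj]
  have hstep2 : d * B ≤ p * (A ^ (1/p) * B ^ (1/q)) := by
    have hcomm : (∫ x, p * |f x| ^ (p-1) * |fderiv ℝ f x x| ∂S.μ)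
        = p * ∫ x, |fderiv ℝ f x x| * |f x| ^ (p-1) ∂S.μ := by
      rw [← integral_const_mul]
      congr 1; funext x; ring
    calc d * B ≤ _ := hstep1
      _ = p * ∫ x, |fderiv ℝ f x x| * |f x| ^ (p-1) ∂S.μ := hcomm
      _ ≤ p * ((∫ x, |fderiv ℝ f x x| ^ p ∂S.μ) ^ (1/p)
            * (∫ x, (|f x| ^ (p-1)) ^ q ∂S.μ) ^ (1/q)) :=
          mul_le_mul_of_nonneg_left hH hp0.le
      _ = p * (A ^ (1/p) * B ^ (1/q)) := by rw [hcollapse, ← hAdef]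
  -- conclusion
  have hB0 : 0 ≤ B := by
    rw [hBdef]; exact integral_nonneg fun x => by positivity
  have hA0 : 0 ≤ A := by
    rw [hAdef]; exact integral_nonneg fun x => by positivity
  rcases hB0.eq_or_lt with hB0' | hB0'
  · rw [ge_iff_le, ← hB0', mul_zero]
    exact hA0
  · have hq1 : (1:ℝ)/q = 1 - 1/p := by
      have h := hpq.inv_add_inv_eq_one
      rw [one_div, one_div]
      linarith
    have hBq : B ^ ((1:ℝ)/q) = B * (B ^ ((1:ℝ)/p))⁻¹ := by
      rw [hq1, Real.rpow_sub hB0', Real.rpow_one, div_eq_mul_inv]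
    have hBp_pos : 0 < B ^ ((1:ℝ)/p) := Real.rpow_pos_of_pos hB0' _
    have hstep3 : d * B ^ ((1:ℝ)/p) ≤ p * A ^ ((1:ℝ)/p) := by
      have h1 : d * B * B ^ ((1:ℝ)/p)
          ≤ p * (A ^ ((1:ℝ)/p) * (B * (B ^ ((1:ℝ)/p))⁻¹)) * B ^ ((1:ℝ)/p) := by
        apply mul_le_mul_of_nonneg_right _ hBp_pos.le
        rw [← hBq]; exact hstep2
      have h2 : p * (A ^ ((1:ℝ)/p) * (B * (B ^ ((1:ℝ)/p))⁻¹)) * B ^ ((1:ℝ)/p)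
          = (p * A ^ ((1:ℝ)/p)) * B := by
        field_simp
      rw [h2] at h1
      have h3 : (d * B ^ ((1:ℝ)/p)) * B ≤ (p * A ^ ((1:ℝ)/p)) * B := by
        calc (d * B ^ ((1:ℝ)/p)) * B = d * B * B ^ ((1:ℝ)/p) := by ring
          _ ≤ _ := h1
      exact le_of_mul_le_mul_right h3 hB0'
    have hfrac : d / p * B ^ ((1:ℝ)/p) ≤ A ^ ((1:ℝ)/p) := by
      rw [div_mul_eq_mul_div, div_le_iff₀ hp0]
      calc d * B ^ ((1:ℝ)/p) ≤ p * A ^ ((1:ℝ)/p) := hstep3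
        _ = A ^ ((1:ℝ)/p) * p := by ring
    have hpow := Real.rpow_le_rpow
      (mul_nonneg (div_nonneg hd0.le hp0.le) hBp_pos.le) hfrac hp0.le
    have hApow : (A ^ ((1:ℝ)/p)) ^ p = A := by
      rw [← Real.rpow_mul hA0, one_div, inv_mul_cancel₀ hp0.ne', Real.rpow_one]
    have hBpow : (B ^ ((1:ℝ)/p)) ^ p = B := by
      rw [← Real.rpow_mul hB0, one_div, inv_mul_cancel₀ hp0.ne', Real.rpow_one]
    rw [Real.mul_rpow (div_nonneg hd0.le hp0.le) hBp_pos.le, hApow, hBpow] at hpow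
    exact hpow
end
end

section
/- Let q ≥ 2, δ > 0, and X(t) = (1 − log t)^{−1} for t ∈ (0,1]. Then there exists a constant C > 0 such that for every g ∈ C_c^∞((0,δ)) one has ∫_0^δ t |g'(t)|² dt ≥ C ( ∫_0^δ (|g(t)|^q / t) X(t/δ)^{1+q/2} dt )^{2/q}. -/
open MeasureTheory Set

section helpers

lemma conj22 : Real.HolderConjugate 2 2 := Real.HolderConjugate.two_two

lemma memL2_of_continuousOn {a b : ℝ} {f : ℝ → ℝ} (hf : ContinuousOn f (Icc a b)) :
    MemLp f 2 (volume.restrict (Ioc a b)) := by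
  haveI : IsFiniteMeasure (volume.restrict (Ioc a b)) := by
    constructor
    rw [Measure.restrict_apply_univ, Real.volume_Ioc]
    exact ENNReal.ofReal_lt_top
  obtain ⟨C, hC⟩ := isCompact_Icc.exists_bound_of_continuousOn hf
  refine MemLp.of_bound ((hf.mono Ioc_subset_Icc_self).aestronglyMeasurable measurableSet_Ioc) C ?_
  exact (ae_restrict_iff' measurableSet_Ioc).mpr
    (ae_of_all _ fun x hx => hC x (Ioc_subset_Icc_self hx))

lemma cs_Ioc {a b : ℝ} {f h : ℝ → ℝ} (hf : ContinuousOn f (Icc a b))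
    (hh : ContinuousOn h (Icc a b)) (hf0 : ∀ x ∈ Ioc a b, 0 ≤ f x)
    (hh0 : ∀ x ∈ Ioc a b, 0 ≤ h x) :
    ∫ x in Ioc a b, f x * h x ≤
      (∫ x in Ioc a b, f x ^ 2) ^ ((1:ℝ)/2) * (∫ x in Ioc a b, h x ^ 2) ^ ((1:ℝ)/2) := by
  have := integral_mul_le_Lp_mul_Lq_of_nonneg (μ := volume.restrict (Ioc a b)) conj22
    ((ae_restrict_iff' measurableSet_Ioc).mpr (ae_of_all _ hf0))
    ((ae_restrict_iff' measurableSet_Ioc).mpr (ae_of_all _ hh0))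
    (by simpa using memL2_of_continuousOn hf) (by simpa using memL2_of_continuousOn hh)
  convert this using 3 <;>
  · refine setIntegral_congr_fun measurableSet_Ioc fun x hx => ?_
    rw [show ((2:ℝ)) = ((2:ℕ):ℝ) by norm_num, Real.rpow_natCast]

lemma one_le_L {δ : ℝ} (hδ : 0 < δ) {t : ℝ} (ht : 0 < t) (htδ : t ≤ δ) :
    1 ≤ 1 - Real.log (t/δ) := by
  have h1 : t/δ ≤ 1 := (div_le_one hδ).mpr htδ
  have := Real.log_nonpos (by positivity) h1
  linarith

lemma sq_half_rpow {E : ℝ} (hE : 0 ≤ E) : (E ^ ((1:ℝ)/2)) ^ 2 = E := by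
  rw [← Real.rpow_natCast (E ^ ((1:ℝ)/2)) 2, ← Real.rpow_mul hE]
  norm_num

lemma hasDerivAt_W {δ : ℝ} (hδ : 0 < δ) {t : ℝ} (ht : 0 < t) (htδ : t < δ) :
    HasDerivAt (fun s => (1 - Real.log (s/δ))⁻¹)
      (((1 - Real.log (t/δ))⁻¹) ^ 2 / t) t := by
  have hL : 1 ≤ 1 - Real.log (t/δ) := one_le_L hδ ht htδ.le
  have h1 : HasDerivAt (fun s : ℝ => s/δ) (1/δ) t := (hasDerivAt_id t).div_const δ
  have h2 : HasDerivAt Real.log (t/δ)⁻¹ (t/δ) := Real.hasDerivAt_log (by positivity)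
  have h3 : HasDerivAt (fun s => Real.log (s/δ)) ((t/δ)⁻¹ * (1/δ)) t := by have := h2.comp t h1; exact this
  have h4 : HasDerivAt (fun s => 1 - Real.log (s/δ)) (-((t/δ)⁻¹ * (1/δ))) t := by
    have := (hasDerivAt_const t (1:ℝ)).sub h3; rwa [zero_sub] at this
  have h5 := h4.inv (by linarith : 1 - Real.log (t/δ) ≠ 0)
  refine h5.congr_deriv ?_
  have hL0 : 1 - Real.log (t/δ) ≠ 0 := by linarith
  rw [neg_neg, inv_pow, inv_div, div_mul_div_comm, mul_one, mul_comm t δ,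
    div_mul_cancel_left₀ hδ.ne']
  ring

lemma ptbd {δ b t : ℝ} {g : ℝ → ℝ} (hδ : 0 < δ) (hg : ContDiff ℝ (⊤ : ℕ∞) g)
    (hbδ : b < δ) (hgb : g b = 0) (ht : 0 < t) (htb : t < b)
    (hint : IntegrableOn (fun s => s * (deriv g s) ^ 2) (Ioo 0 δ)) :
    (g t) ^ 2 ≤ (1 - Real.log (t/δ)) * ∫ s in Ioo 0 δ, s * (deriv g s) ^ 2 := by
  have hd : Continuous (deriv g) := hg.continuous_deriv (by simp)
  have hftc : ∫ s in t..b, deriv g s = g b - g t :=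
    intervalIntegral.integral_deriv_eq_sub
      (fun x _ => (hg.differentiable (by simp)).differentiableAt) (hd.intervalIntegrable t b)
  rw [intervalIntegral.integral_of_le htb.le, hgb, zero_sub] at hftc
  have h1 : |g t| ≤ ∫ s in Ioc t b, |deriv g s| := by
    have : g t = -(∫ s in Ioc t b, deriv g s) := by linarith [hftc]
    rw [this, abs_neg]
    simpa [Real.norm_eq_abs] using
      norm_integral_le_integral_norm (μ := volume.restrict (Ioc t b)) (deriv g)
  have hsqrt_ne : ∀ x ∈ Icc t b, Real.sqrt x ≠ 0 := fun x hx =>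
    Real.sqrt_ne_zero'.mpr (lt_of_lt_of_le ht hx.1)
  have hcs := cs_Ioc (f := fun x => (Real.sqrt x)⁻¹)
    (h := fun x => Real.sqrt x * |deriv g x|)
    ((Real.continuous_sqrt.continuousOn).inv₀ hsqrt_ne)
    (Real.continuous_sqrt.mul hd.abs).continuousOn
    (fun x _ => by positivity) (fun x _ => by positivity)
  have he : ∫ s in Ioc t b, |deriv g s|
      = ∫ x in Ioc t b, (Real.sqrt x)⁻¹ * (Real.sqrt x * |deriv g x|) := by
    refine setIntegral_congr_fun measurableSet_Ioc fun x hx => ?_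
    have : Real.sqrt x ≠ 0 := Real.sqrt_ne_zero'.mpr (lt_trans ht hx.1)
    field_simp
  have hE1 : (∫ x in Ioc t b, ((Real.sqrt x)⁻¹) ^ 2) = Real.log b - Real.log t := by
    have : ∀ x ∈ Ioc t b, ((Real.sqrt x)⁻¹) ^ 2 = x⁻¹ := fun x hx => by
      rw [inv_pow, Real.sq_sqrt (lt_trans ht hx.1).le]
    rw [setIntegral_congr_fun measurableSet_Ioc this,
      ← intervalIntegral.integral_of_le htb.le, integral_inv_of_pos ht (lt_trans ht htb),
      Real.log_div (lt_trans ht htb).ne' ht.ne']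
  have hE2eq : ∀ x ∈ Ioc t b, (Real.sqrt x * |deriv g x|) ^ 2 = x * (deriv g x) ^ 2 :=
    fun x hx => by rw [mul_pow, Real.sq_sqrt (lt_trans ht hx.1).le, sq_abs]
  have hE2 : (∫ x in Ioc t b, (Real.sqrt x * |deriv g x|) ^ 2)
      ≤ ∫ s in Ioo 0 δ, s * (deriv g s) ^ 2 := by
    rw [setIntegral_congr_fun measurableSet_Ioc hE2eq]
    refine setIntegral_mono_set hint ?_ (HasSubset.Subset.eventuallyLE ?_)
    · exact (ae_restrict_iff' measurableSet_Ioo).mpr (ae_of_all _ fun x hx => by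
        have := hx.1; positivity)
    · exact fun x hx => ⟨lt_trans ht hx.1, lt_of_le_of_lt hx.2 hbδ⟩
  set A := ∫ s in Ioo 0 δ, s * (deriv g s) ^ 2 with hA
  have hAnn : 0 ≤ A := setIntegral_nonneg measurableSet_Ioo fun x hx => by
    have := hx.1; positivity
  have hE1nn : 0 ≤ ∫ x in Ioc t b, ((Real.sqrt x)⁻¹) ^ 2 :=
    setIntegral_nonneg measurableSet_Ioc fun x hx => by positivity
  have hE2nn : 0 ≤ ∫ x in Ioc t b, (Real.sqrt x * |deriv g x|) ^ 2 :=
    setIntegral_nonneg measurableSet_Ioc fun x hx => by positivity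
  have hLnn : (0:ℝ) ≤ 1 - Real.log (t/δ) := by
    have := one_le_L hδ ht (by linarith : t ≤ δ); linarith
  have hL : Real.log b - Real.log t ≤ 1 - Real.log (t/δ) := by
    have h2 : Real.log b ≤ Real.log δ := Real.log_le_log (lt_trans ht htb) hbδ.le
    have h3 : Real.log (t/δ) = Real.log t - Real.log δ := Real.log_div ht.ne' hδ.ne'
    linarith
  have key : |g t| ≤ ((1 - Real.log (t/δ)) * A) ^ ((1:ℝ)/2) := by
    calc |g t| ≤ ∫ s in Ioc t b, |deriv g s| := h1
      _ = _ := he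
      _ ≤ (∫ x in Ioc t b, ((Real.sqrt x)⁻¹) ^ 2) ^ ((1:ℝ)/2)
          * (∫ x in Ioc t b, (Real.sqrt x * |deriv g x|) ^ 2) ^ ((1:ℝ)/2) := hcs
      _ ≤ ((1 - Real.log (t/δ))) ^ ((1:ℝ)/2) * A ^ ((1:ℝ)/2) := by
          apply mul_le_mul
          · exact Real.rpow_le_rpow hE1nn (hE1 ▸ hL) (by norm_num)
          · exact Real.rpow_le_rpow hE2nn hE2 (by norm_num)
          · exact Real.rpow_nonneg hE2nn _
          · exact Real.rpow_nonneg hLnn _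
      _ = ((1 - Real.log (t/δ)) * A) ^ ((1:ℝ)/2) := by
          rw [← Real.mul_rpow hLnn hAnn]
  calc (g t) ^ 2 = |g t| ^ 2 := (sq_abs _).symm
    _ ≤ (((1 - Real.log (t/δ)) * A) ^ ((1:ℝ)/2)) ^ 2 := by
        exact pow_le_pow_left₀ (abs_nonneg _) key 2
    _ = (1 - Real.log (t/δ)) * A := sq_half_rpow (mul_nonneg hLnn hAnn)

end helpers

noncomputable section

/-- One-dimensional weighted Hardy inequality with logarithmic weight
`X(t) = (1 − log t)⁻¹`: for `q ≥ 2` and `δ > 0` there is `C > 0` such that for every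
`g ∈ C_c^∞((0,δ))`,
`∫_0^δ t |g'(t)|² dt ≥ C (∫_0^δ (|g(t)|^q / t) X(t/δ)^{1+q/2} dt)^{2/q}`. -/
theorem one_dim_weighted_hardy (q δ : ℝ) (hq : 2 ≤ q) (hδ : 0 < δ) :
    ∃ C > (0 : ℝ), ∀ g : ℝ → ℝ, ContDiff ℝ (⊤ : ℕ∞) g → HasCompactSupport g →
      tsupport g ⊆ Set.Ioo 0 δ →
      ∫ t in Set.Ioo (0 : ℝ) δ, t * (deriv g t) ^ 2 ≥
        C * (∫ t in Set.Ioo (0 : ℝ) δ,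
          (|g t| ^ q / t) * ((1 - Real.log (t / δ))⁻¹) ^ (1 + q / 2)) ^ (2 / q) := by
  have hq0 : (0:ℝ) < q := by linarith
  refine ⟨(4:ℝ) ^ (-(2/q)), Real.rpow_pos_of_pos (by norm_num) _, fun g hg hgc hgs => ?_⟩
  by_cases hg0 : ∀ x, g x = 0
  · have hgfun : g = fun _ => 0 := funext hg0
    have hder : ∀ t : ℝ, deriv g t = 0 := by
      intro t; rw [hgfun]; exact deriv_const t 0
    have hL : ∫ t in Set.Ioo (0 : ℝ) δ, t * (deriv g t) ^ 2 = 0 := by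
      rw [setIntegral_congr_fun measurableSet_Ioo
        (fun x _ => by rw [hder x]; ring : ∀ x ∈ Ioo (0:ℝ) δ,
          x * (deriv g x) ^ 2 = 0)]
      simp
    have hR : ∫ t in Set.Ioo (0 : ℝ) δ,
        (|g t| ^ q / t) * ((1 - Real.log (t / δ))⁻¹) ^ (1 + q / 2) = 0 := by
      rw [setIntegral_congr_fun measurableSet_Ioo
        (fun x _ => by rw [hg0 x]; simp [Real.zero_rpow hq0.ne'] :
          ∀ x ∈ Ioo (0:ℝ) δ, (|g x| ^ q / x) * ((1 - Real.log (x / δ))⁻¹) ^ (1 + q / 2) = 0)]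
      simp
    rw [hL, hR, Real.zero_rpow (by positivity : (2/q : ℝ) ≠ 0), mul_zero]
  · -- nontrivial case
    push_neg at hg0
    obtain ⟨x₀, hx₀⟩ := hg0
    have hKne : (tsupport g).Nonempty := ⟨x₀, subset_tsupport g (by simpa using hx₀)⟩
    have hKc : IsCompact (tsupport g) := hgc
    set a0 := sInf (tsupport g) with ha0def
    set b0 := sSup (tsupport g) with hb0def
    have ha0K : a0 ∈ tsupport g := hKc.sInf_mem hKne
    have hb0K : b0 ∈ tsupport g := hKc.sSup_mem hKne
    have ha0 : a0 ∈ Ioo (0:ℝ) δ := hgs ha0K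
    have hb0 : b0 ∈ Ioo (0:ℝ) δ := hgs hb0K
    have hKsub : tsupport g ⊆ Icc a0 b0 := fun x hx =>
      ⟨csInf_le hKc.bddBelow hx, le_csSup hKc.bddAbove hx⟩
    set a := a0/2 with hadef
    set b := (b0 + δ)/2 with hbdef
    have ha : 0 < a := by simp only [hadef]; linarith [ha0.1]
    have haa0 : a < a0 := by simp only [hadef]; linarith [ha0.1]
    have hb0b : b0 < b := by simp only [hbdef]; linarith [hb0.2]
    have hbδ : b < δ := by simp only [hbdef]; linarith [hb0.2]
    have hab : a < b := by
      have : a0 ≤ b0 := csInf_le_csSup hKne hKc.bddBelow hKc.bddAbove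
      linarith
    have hKsub2 : tsupport g ⊆ Ioo a b := fun x hx =>
      ⟨lt_of_lt_of_le haa0 (hKsub hx).1, lt_of_le_of_lt (hKsub hx).2 hb0b⟩
    have hzero : ∀ x, x ∉ Ioo a b → g x = 0 := fun x hx =>
      image_eq_zero_of_notMem_tsupport (fun h => hx (hKsub2 h))
    have hdzero : ∀ x, x ∉ Ioo a b → deriv g x = 0 := fun x hx => by
      by_contra h
      exact hx (hKsub2 (support_deriv_subset (by simpa [Function.mem_support] using h)))
    have hga : g a = 0 := hzero a (fun h => lt_irrefl a h.1)
    have hgb : g b = 0 := hzero b (fun h => lt_irrefl b h.2)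
    have hd : Continuous (deriv g) := hg.continuous_deriv (by simp)
    have hcg : Continuous g := hg.continuous
    have hsub : Ioc a b ⊆ Ioo 0 δ := fun x hx =>
      ⟨lt_trans ha hx.1, lt_of_le_of_lt hx.2 hbδ⟩
    have hIccsub : Icc a b ⊆ Ioo 0 δ := fun x hx =>
      ⟨lt_of_lt_of_le ha hx.1, lt_of_le_of_lt hx.2 hbδ⟩
    have hred : ∀ f : ℝ → ℝ, (∀ x, x ∉ Ioc a b → f x = 0) →
        ∫ x in Ioo 0 δ, f x = ∫ x in Ioc a b, f x := fun f hf =>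
      setIntegral_eq_of_subset_of_forall_diff_eq_zero measurableSet_Ioo hsub
        (fun x hx => hf x hx.2)
    set W : ℝ → ℝ := fun t => (1 - Real.log (t/δ))⁻¹ with hWdef
    -- basic facts about W on Icc a b
    have hWpos : ∀ x ∈ Icc a b, 0 < W x := fun x hx => by
      have := one_le_L hδ (hIccsub hx).1 (hIccsub hx).2.le
      simp only [hWdef]; positivity
    have hWle1 : ∀ x ∈ Icc a b, W x ≤ 1 := fun x hx => by
      have h1 := one_le_L hδ (hIccsub hx).1 (hIccsub hx).2.le
      simp only [hWdef]
      rw [inv_le_one_iff₀]; right; exact h1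
    have hLcont : ContinuousOn (fun x => 1 - Real.log (x/δ)) (Icc a b) :=
      continuousOn_const.sub (((continuousOn_id.div_const δ).log
        (fun x hx => by have := (hIccsub hx).1; positivity)))
    have hWcont : ContinuousOn W (Icc a b) :=
      hLcont.inv₀ (fun x hx => by
        have := one_le_L hδ (hIccsub hx).1 (hIccsub hx).2.le; intro h; rw [h] at this; linarith)
    -- the three main quantities
    set A := ∫ x in Ioo (0:ℝ) δ, x * (deriv g x) ^ 2 with hAdef
    have hφcont : Continuous (fun x : ℝ => x * (deriv g x) ^ 2) :=
      continuous_id.mul (hd.pow 2)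
    have hintA : IntegrableOn (fun s => s * (deriv g s) ^ 2) (Ioo 0 δ) :=
      (hφcont.integrableOn_Icc (a := 0) (b := δ)).mono_set Ioo_subset_Icc_self
    have hAnn : 0 ≤ A := setIntegral_nonneg measurableSet_Ioo fun x hx => by
      have := hx.1; positivity
    -- pointwise bound (step a)
    have hpt : ∀ t ∈ Ioo (0:ℝ) δ, (g t) ^ 2 * W t ≤ A := by
      intro t ht
      by_cases htb : t < b
      · have h1 := ptbd hδ hg hbδ hgb ht.1 htb hintA
        have hL1 := one_le_L hδ ht.1 ht.2.le
        have hWt : W t = (1 - Real.log (t/δ))⁻¹ := rfl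
        have hWtpos : 0 < W t := by rw [hWt]; positivity
        calc (g t) ^ 2 * W t ≤ ((1 - Real.log (t/δ)) * A) * W t :=
              mul_le_mul_of_nonneg_right h1 hWtpos.le
          _ = A * ((1 - Real.log (t/δ)) * (1 - Real.log (t/δ))⁻¹) := by rw [hWt]; ring
          _ = A := by rw [mul_inv_cancel₀ (by linarith), mul_one]
      · have : g t = 0 := hzero t (fun h => htb h.2)
        rw [this]
        simpa using hAnn
    -- A is positive
    have hApos : 0 < A := by
      have hx₀mem : x₀ ∈ Ioo (0:ℝ) δ := hgs (subset_tsupport g (by simpa using hx₀))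
      have h1 := hpt x₀ hx₀mem
      have hL1 := one_le_L hδ hx₀mem.1 hx₀mem.2.le
      have hWpos' : 0 < W x₀ := by simp only [hWdef]; positivity
      have : 0 < (g x₀) ^ 2 * W x₀ := by positivity
      linarith
    -- step (c) : B ≤ 4 A via integration by parts
    set B := ∫ x in Ioc a b, (g x) ^ 2 * (W x ^ 2 / x) with hBdef
    have hBcont : ContinuousOn (fun x => (g x) ^ 2 * (W x ^ 2 / x)) (Icc a b) :=
      ((hcg.continuousOn.pow 2).mul ((hWcont.pow 2).div continuousOn_id
        (fun x hx => (hIccsub hx).1.ne')))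
    have hBnn : 0 ≤ B := setIntegral_nonneg measurableSet_Ioc fun x hx => by
      have h1 := (hsub hx).1
      have h2 := (hWpos x (Ioc_subset_Icc_self hx)).le
      positivity
    have hintB : IntegrableOn (fun x => (g x) ^ 2 * (W x ^ 2 / x)) (Ioc a b) :=
      (hBcont.integrableOn_Icc).mono_set Ioc_subset_Icc_self
    -- IBP
    have huIcc : uIcc a b = Icc a b := uIcc_of_le hab.le
    have hu : ∀ x ∈ uIcc a b, HasDerivAt (fun t => (g t) ^ 2) (2 * g x * deriv g x) x := by
      intro x _
      have := ((hg.differentiable (by simp)).differentiableAt (x := x)).hasDerivAt.pow 2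
      refine this.congr_deriv ?_; norm_num
    have hv : ∀ x ∈ uIcc a b, HasDerivAt W (W x ^ 2 / x) x := by
      intro x hx
      rw [huIcc] at hx
      exact hasDerivAt_W hδ (hIccsub hx).1 (hIccsub hx).2
    have hu'int : IntervalIntegrable (fun x => 2 * g x * deriv g x) volume a b :=
      ((continuous_const.mul hcg).mul hd).intervalIntegrable a b
    have hv'int : IntervalIntegrable (fun x => W x ^ 2 / x) volume a b := by
      apply ContinuousOn.intervalIntegrable
      rw [huIcc]
      exact (hWcont.pow 2).div continuousOn_id (fun x hx => (hIccsub hx).1.ne')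
    have hIBP := intervalIntegral.integral_mul_deriv_eq_deriv_mul hu hv hu'int hv'int
    rw [hga, hgb] at hIBP
    norm_num at hIBP
    have hB2 : B = ∫ x in Ioc a b, -(2 * g x * deriv g x * W x) := by
      rw [hBdef, ← intervalIntegral.integral_of_le hab.le, hIBP,
        ← intervalIntegral.integral_neg, intervalIntegral.integral_of_le hab.le]
    -- bound B by Cauchy-Schwarz
    have hsqrt_pos : ∀ x ∈ Icc a b, 0 < Real.sqrt x := fun x hx =>
      Real.sqrt_pos.mpr (hIccsub hx).1
    have hcsB := cs_Ioc (a := a) (b := b)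
      (f := fun x => 2 * |g x| * W x / Real.sqrt x)
      (h := fun x => Real.sqrt x * |deriv g x|)
      ((((continuous_const.mul hcg.abs).continuousOn.mul hWcont)).div
        Real.continuous_sqrt.continuousOn (fun x hx => (hsqrt_pos x hx).ne'))
      (Real.continuous_sqrt.mul hd.abs).continuousOn
      (fun x hx => by
        have h1 := hWpos x (Ioc_subset_Icc_self hx)
        have h2 := hsqrt_pos x (Ioc_subset_Icc_self hx)
        positivity)
      (fun x _ => by positivity)
    have hBle : B ≤ 2 * B ^ ((1:ℝ)/2) * A ^ ((1:ℝ)/2) := by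
      have step1 : B ≤ ∫ x in Ioc a b,
          (2 * |g x| * W x / Real.sqrt x) * (Real.sqrt x * |deriv g x|) := by
        rw [hB2]
        refine setIntegral_mono_on ?_ ?_ measurableSet_Ioc (fun x hx => ?_)
        · exact ((ContinuousOn.integrableOn_Icc
            (((continuous_const.mul hcg).mul hd).continuousOn.mul hWcont)).mono_set
            Ioc_subset_Icc_self).neg
        · exact (ContinuousOn.integrableOn_Icc
            ((((continuous_const.mul hcg.abs).continuousOn.mul hWcont).div
              Real.continuous_sqrt.continuousOn (fun x hx => (hsqrt_pos x hx).ne')).mul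
              (Real.continuous_sqrt.mul hd.abs).continuousOn)).mono_set
            Ioc_subset_Icc_self
        · have hxI := Ioc_subset_Icc_self hx
          have hWx := hWpos x hxI
          have hsx := hsqrt_pos x hxI
          have heq : (2 * |g x| * W x / Real.sqrt x) * (Real.sqrt x * |deriv g x|)
              = 2 * |g x| * |deriv g x| * W x := by
            field_simp
          rw [heq]
          have : -(2 * g x * deriv g x * W x) ≤ |2 * g x * deriv g x * W x| := neg_le_abs _
          refine le_trans this (le_of_eq ?_)
          rw [abs_mul, abs_mul, abs_mul, abs_of_pos hWx, abs_two]
      have hfsq : ∫ x in Ioc a b, (2 * |g x| * W x / Real.sqrt x) ^ 2 = 4 * B := by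
        rw [hBdef, ← integral_const_mul]
        refine setIntegral_congr_fun measurableSet_Ioc fun x hx => ?_
        have hx0 := (hsub hx).1
        have hsx := hsqrt_pos x (Ioc_subset_Icc_self hx)
        rw [div_pow, mul_pow, mul_pow, Real.sq_sqrt hx0.le, sq_abs]
        field_simp
        ring
      have hhsq : ∫ x in Ioc a b, (Real.sqrt x * |deriv g x|) ^ 2 ≤ A := by
        have : ∀ x ∈ Ioc a b, (Real.sqrt x * |deriv g x|) ^ 2 = x * (deriv g x) ^ 2 :=
          fun x hx => by rw [mul_pow, Real.sq_sqrt (hsub hx).1.le, sq_abs]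
        rw [setIntegral_congr_fun measurableSet_Ioc this, hAdef]
        exact setIntegral_mono_set hintA
          ((ae_restrict_iff' measurableSet_Ioo).mpr (ae_of_all _ fun x hx => by
            have := hx.1; positivity))
          (HasSubset.Subset.eventuallyLE hsub)
      have hhnn : 0 ≤ ∫ x in Ioc a b, (Real.sqrt x * |deriv g x|) ^ 2 :=
        setIntegral_nonneg measurableSet_Ioc fun x hx => by positivity
      calc B ≤ _ := step1
        _ ≤ (∫ x in Ioc a b, (2 * |g x| * W x / Real.sqrt x) ^ 2) ^ ((1:ℝ)/2)
            * (∫ x in Ioc a b, (Real.sqrt x * |deriv g x|) ^ 2) ^ ((1:ℝ)/2) := hcsB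
        _ ≤ (4 * B) ^ ((1:ℝ)/2) * A ^ ((1:ℝ)/2) := by
            apply mul_le_mul
            · exact le_of_eq (by rw [hfsq])
            · exact Real.rpow_le_rpow hhnn hhsq (by norm_num)
            · exact Real.rpow_nonneg hhnn _
            · exact Real.rpow_nonneg (by positivity) _
        _ = 2 * B ^ ((1:ℝ)/2) * A ^ ((1:ℝ)/2) := by
            rw [Real.mul_rpow (by norm_num) hBnn]
            congr 2
            rw [show (4:ℝ) = 2^(2:ℕ) by norm_num, ← Real.rpow_natCast 2 2,
              ← Real.rpow_mul (by norm_num)]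
            norm_num
    have hB4A : B ≤ 4 * A := by
      have h1 : (B ^ ((1:ℝ)/2)) ^ 2 = B := sq_half_rpow hBnn
      have h2 : (A ^ ((1:ℝ)/2)) ^ 2 = A := sq_half_rpow hAnn
      have h3 : 0 ≤ B ^ ((1:ℝ)/2) := Real.rpow_nonneg hBnn _
      have h4 : 0 ≤ A ^ ((1:ℝ)/2) := Real.rpow_nonneg hAnn _
      nlinarith [sq_nonneg (B ^ ((1:ℝ)/2) - 2 * A ^ ((1:ℝ)/2))]
    -- step (b) : bound D
    set ψ : ℝ → ℝ := fun t => (|g t| ^ q / t) * ((1 - Real.log (t / δ))⁻¹) ^ (1 + q / 2)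
      with hψdef
    have hψW : ∀ t, ψ t = (|g t| ^ q / t) * (W t) ^ (1 + q / 2) := fun t => rfl
    have hψcont : ContinuousOn ψ (Icc a b) := by
      apply ContinuousOn.mul
      · exact (hcg.abs.continuousOn.rpow_const (fun x _ => Or.inr hq0.le)).div
          continuousOn_id (fun x hx => (hIccsub hx).1.ne')
      · exact hWcont.rpow_const (fun x hx => Or.inr (by linarith))
    have hintψ : IntegrableOn ψ (Ioc a b) :=
      hψcont.integrableOn_Icc.mono_set Ioc_subset_Icc_self
    set D := ∫ x in Ioc a b, ψ x with hDdef
    have hDnn : 0 ≤ D := setIntegral_nonneg measurableSet_Ioc fun x hx => by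
      have h1 := (hsub hx).1
      have h2 := (hWpos x (Ioc_subset_Icc_self hx)).le
      have h3 : (0:ℝ) ≤ |g x| ^ q := Real.rpow_nonneg (abs_nonneg _) _
      have h4 : (0:ℝ) ≤ (W x) ^ (1 + q/2) := Real.rpow_nonneg h2 _
      rw [hψW]
      positivity
    have hptD : ∀ x ∈ Ioc a b, ψ x ≤ A ^ (q/2 - 1) * ((g x) ^ 2 * (W x ^ 2 / x)) := by
      intro x hx
      have hx0 : 0 < x := (hsub hx).1
      have hWx : 0 < W x := hWpos x (Ioc_subset_Icc_self hx)
      by_cases hgx : g x = 0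
      · rw [hψW, hgx]
        simp [Real.zero_rpow hq0.ne', abs_zero]
        all_goals positivity
      · have hu : 0 < (g x) ^ 2 := by positivity
        have e1 : |g x| ^ q = ((g x) ^ 2) ^ (q/2 : ℝ) := by
          rw [show (g x) ^ 2 = |g x| ^ (2:ℕ) from (sq_abs _).symm,
            ← Real.rpow_natCast |g x| 2, ← Real.rpow_mul (abs_nonneg _)]
          norm_num
          congr 1
          ring
        have e2 : (W x) ^ (1 + q/2 : ℝ) = (W x) ^ (q/2 - 1 : ℝ) * (W x) ^ (2:ℕ) := by
          rw [← Real.rpow_natCast (W x) 2, ← Real.rpow_add hWx]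
          congr 1
          ring
        have e3 : ((g x) ^ 2) ^ (q/2 : ℝ) = ((g x) ^ 2) ^ (q/2 - 1 : ℝ) * (g x) ^ 2 := by
          nth_rewrite 3 [show (g x)^2 = ((g x)^2) ^ (1:ℝ) by rw [Real.rpow_one]]
          rw [← Real.rpow_add hu]
          congr 1
          ring
        have e4 : ((g x) ^ 2) ^ (q/2 - 1 : ℝ) * (W x) ^ (q/2 - 1 : ℝ)
            = ((g x) ^ 2 * W x) ^ (q/2 - 1 : ℝ) :=
          (Real.mul_rpow hu.le hWx.le).symm
        have hle : ((g x) ^ 2 * W x) ^ (q/2 - 1 : ℝ) ≤ A ^ (q/2 - 1 : ℝ) :=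
          Real.rpow_le_rpow (by positivity) (hpt x (hsub hx)) (by linarith)
        have heq : ψ x = ((g x) ^ 2 * W x) ^ (q/2 - 1 : ℝ) * ((g x) ^ 2 * (W x ^ 2 / x)) := by
          rw [hψW, e1, e2, e3, ← e4]
          field_simp
        rw [heq]
        apply mul_le_mul_of_nonneg_right hle
        positivity
    have hDle : D ≤ A ^ (q/2 - 1 : ℝ) * B := by
      rw [hDdef, hBdef, ← integral_const_mul]
      refine setIntegral_mono_on hintψ ?_ measurableSet_Ioc hptD
      exact ((continuousOn_const.mul hBcont).integrableOn_Icc).mono_set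
        Ioc_subset_Icc_self
    have hD4 : D ≤ 4 * A ^ (q/2 : ℝ) := by
      have h1 : A ^ (q/2 - 1 : ℝ) * B ≤ A ^ (q/2 - 1 : ℝ) * (4 * A) :=
        mul_le_mul_of_nonneg_left hB4A (Real.rpow_nonneg hAnn _)
      have h2 : A ^ (q/2 - 1 : ℝ) * (4 * A) = 4 * A ^ (q/2 : ℝ) := by
        have e : A ^ (q/2 : ℝ) = A ^ (q/2 - 1 : ℝ) * A ^ (1:ℝ) := by
          rw [← Real.rpow_add hApos]
          congr 1
          ring
        rw [e, Real.rpow_one]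
        ring
      exact le_trans hDle (le_of_le_of_eq h1 h2)
    -- conclude
    have hredA : ∫ t in Set.Ioo (0 : ℝ) δ, t * (deriv g t) ^ 2 = A := hAdef.symm
    have hredD : (∫ t in Set.Ioo (0 : ℝ) δ, ψ t) = D := by
      rw [hDdef]
      apply hred
      intro x hx
      have hgx : g x = 0 := hzero x (fun h => hx ⟨h.1, h.2.le⟩)
      rw [hψW, hgx]
      simp [Real.zero_rpow hq0.ne']
    show _ ≥ (4:ℝ) ^ (-(2/q)) * (∫ t in Set.Ioo (0 : ℝ) δ, ψ t) ^ (2/q)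
    rw [hredD, ge_iff_le]
    have hfin : D ^ (2/q : ℝ) ≤ 4 ^ (2/q : ℝ) * A := by
      calc D ^ (2/q : ℝ) ≤ (4 * A ^ (q/2 : ℝ)) ^ (2/q : ℝ) :=
            Real.rpow_le_rpow hDnn hD4 (by positivity)
        _ = 4 ^ (2/q : ℝ) * (A ^ (q/2 : ℝ)) ^ (2/q : ℝ) :=
            Real.mul_rpow (by norm_num) (Real.rpow_nonneg hAnn _)
        _ = 4 ^ (2/q : ℝ) * A := by
            rw [← Real.rpow_mul hAnn, show (q/2 : ℝ) * (2/q) = 1 by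
              field_simp]
            rw [Real.rpow_one]
    calc (4:ℝ) ^ (-(2/q)) * D ^ (2/q : ℝ) ≤ (4:ℝ) ^ (-(2/q)) * (4 ^ (2/q : ℝ) * A) :=
          mul_le_mul_of_nonneg_left hfin (Real.rpow_nonneg (by norm_num) _)
      _ = A := by
          rw [← mul_assoc, ← Real.rpow_add (by norm_num : (0:ℝ) < 4)]
          norm_num
end
end
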